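/- Let A ∈ ℝ^{m×n}, b ∈ ℝ^m with Ax⋆ = b for x⋆ in the row space of A, and let S ∈ ℝ^{d×m} be such that all rows of SA are nonzero. Define the iteration: given x_k, choose i_k = argmax_{1≤i≤d} |(Sb)_i - (SA x_k)_i|/‖(SA)^{(i)}‖₂, and set x_{k+1} = x_k + (((Sb)_{i_k} - (SA)^{(i_k)} x_k)/‖(SA)^{(i_k)}‖₂²)·((SA)^{(i_k)})ᵀ. If x_k - x⋆ lies in the row space of A, then ‖x_{k+1} - x⋆‖₂² ≤ ‖x_k - x⋆‖₂² - ‖SA(x_k - x⋆)‖₂²/‖SA‖_F². -/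

import Mathlib

open scoped BigOperators

noncomputable def sqNorm {n : ℕ} (x : Fin n → ℝ) : ℝ := ∑ i, x i ^ 2

noncomputable def frobSq {d n : ℕ} (M : Matrix (Fin d) (Fin n) ℝ) : ℝ :=
  ∑ i, ∑ j, (M i j) ^ 2

/-- The `k`-th largest singular value of a real matrix, via the Courant–Fischer
max-min characterization: the supremum of nonnegative `c` such that some
`k`-dimensional subspace `V` satisfies `‖Ay‖ ≥ c‖y‖` for all `y ∈ V`. -/
noncomputable def sv {m n : ℕ} (A : Matrix (Fin m) (Fin n) ℝ) (k : ℕ) : ℝ :=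
  sSup {c : ℝ | 0 ≤ c ∧ ∃ V : Submodule ℝ (Fin n → ℝ), Module.finrank ℝ V = k ∧
    ∀ y ∈ V, c ^ 2 * sqNorm y ≤ sqNorm (A.mulVec y)}

/-!
Since `S b = S A x⋆`, the residual selected by the rule is `-(SA e_k)`, and the step replaces
`e_k` by its orthogonal projection onto the hyperplane orthogonal to the row `a = (SA)^{(i_k)}`,
so Pythagoras gives `‖e_{k+1}‖² = ‖e_k‖² - (a·e_k)² / ‖a‖²`. The greedy choice of `i_k` makes
`(a·e_k)² / ‖a‖²` the largest of the ratios `((SA)^{(i)}·e_k)² / ‖(SA)^{(i)}‖²`, and the largest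
ratio dominates the ratio of the sums, `‖SA e_k‖² / ‖SA‖_F²`.
-/

lemma sqNorm_nonneg {n : ℕ} (x : Fin n → ℝ) : 0 ≤ sqNorm x :=
  Finset.sum_nonneg fun i _ => sq_nonneg (x i)

lemma eq_zero_of_sqNorm_eq_zero {n : ℕ} {x : Fin n → ℝ} (h : sqNorm x = 0) : x = 0 := by
  funext i
  have hsq := (Finset.sum_eq_zero_iff_of_nonneg fun j _ => sq_nonneg (x j)).mp h i
    (Finset.mem_univ i)
  exact pow_eq_zero_iff two_ne_zero |>.mp hsq

lemma sqNorm_sub_smul {n : ℕ} (x v : Fin n → ℝ) (c : ℝ) :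
    sqNorm (x - c • v) = sqNorm x - 2 * c * (v ⬝ᵥ x) + c ^ 2 * sqNorm v := by
  simp only [sqNorm, dotProduct, Pi.sub_apply, Pi.smul_apply, smul_eq_mul, Finset.mul_sum,
    ← Finset.sum_sub_distrib, ← Finset.sum_add_distrib]
  exact Finset.sum_congr rfl fun i _ => by ring

lemma sqNorm_sub_orthogonalProjection {n : ℕ} (e a : Fin n → ℝ) :
    sqNorm (e - ((a ⬝ᵥ e) / sqNorm a) • a) = sqNorm e - (a ⬝ᵥ e) ^ 2 / sqNorm a := by
  by_cases ha : sqNorm a = 0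
  · simp [eq_zero_of_sqNorm_eq_zero ha]
  · rw [sqNorm_sub_smul]
    field_simp
    ring

lemma sum_div_sum_le_of_forall_div_le {ι : Type*} [Fintype ι] {p s : ι → ℝ}
    (hp : ∀ i, 0 ≤ p i) (hs : ∀ i, 0 ≤ s i) (hps : ∀ i, s i = 0 → p i = 0) {k : ι}
    (hk : ∀ i, p i / s i ≤ p k / s k) :
    (∑ i, p i) / ∑ i, s i ≤ p k / s k := by
  have hle : ∀ i, p i ≤ p k / s k * s i := fun i => by
    rcases (hs i).eq_or_lt with hzero | hpos
    · simp [hps i hzero.symm, ← hzero]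
    · calc p i = p i / s i * s i := (div_mul_cancel₀ _ hpos.ne').symm
        _ ≤ p k / s k * s i := mul_le_mul_of_nonneg_right (hk i) hpos.le
  refine div_le_of_le_mul₀ (Finset.sum_nonneg fun i _ => hs i)
    (div_nonneg (hp k) (hs k)) ?_
  rw [Finset.mul_sum]
  exact Finset.sum_le_sum fun i _ => hle i

lemma sqNorm_mulVec_div_frobSq_le {d n : ℕ} (M : Matrix (Fin d) (Fin n) ℝ) (e : Fin n → ℝ)
    {k : Fin d}
    (hk : ∀ i, |M.mulVec e i| / √(sqNorm (M i)) ≤ |M.mulVec e k| / √(sqNorm (M k))) :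
    sqNorm (M.mulVec e) / frobSq M ≤ M.mulVec e k ^ 2 / sqNorm (M k) := by
  have hsq : ∀ i, (|M.mulVec e i| / √(sqNorm (M i))) ^ 2 = M.mulVec e i ^ 2 / sqNorm (M i) :=
    fun i => by rw [div_pow, sq_abs, Real.sq_sqrt (sqNorm_nonneg _)]
  refine sum_div_sum_le_of_forall_div_le (fun i => sq_nonneg _) (fun i => sqNorm_nonneg _)
    (fun i hi => ?_) (fun i => ?_)
  · simp [Matrix.mulVec, eq_zero_of_sqNorm_eq_zero hi]
  · rw [← hsq, ← hsq]
    exact pow_le_pow_left₀ (by positivity) (hk i) 2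

theorem csk_one_step_bound_general {m n d : ℕ}
    (A : Matrix (Fin m) (Fin n) ℝ) (b : Fin m → ℝ) (xs : Fin n → ℝ)
    (hxs : A.mulVec xs = b)
    (S : Matrix (Fin d) (Fin m) ℝ)
    (xk : Fin n → ℝ)
    (ik : Fin d)
    (hik : ∀ i : Fin d,
      |S.mulVec b i - (S * A).mulVec xk i| / Real.sqrt (sqNorm ((S * A) i)) ≤
      |S.mulVec b ik - (S * A).mulVec xk ik| / Real.sqrt (sqNorm ((S * A) ik)))
    (xk1 : Fin n → ℝ)
    (hupd : xk1 = xk + ((S.mulVec b ik - ∑ j, (S * A) ik j * xk j) / sqNorm ((S * A) ik))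
        • (S * A) ik) :
    sqNorm (xk1 - xs) ≤ sqNorm (xk - xs)
      - sqNorm ((S * A).mulVec (xk - xs)) / frobSq (S * A) := by
  set M := S * A
  set e := xk - xs
  have hres : ∀ i, S.mulVec b i - M.mulVec xk i = -M.mulVec e i := fun i => by
    rw [← hxs, Matrix.mulVec_mulVec, Matrix.mulVec_sub, Pi.sub_apply]
    ring
  have hstep : xk1 - xs = e - ((M ik ⬝ᵥ e) / sqNorm (M ik)) • M ik := by
    rw [hupd, show S.mulVec b ik - ∑ j, M ik j * xk j = -(M ik ⬝ᵥ e) from hres ik,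
      neg_div, neg_smul, ← sub_eq_add_neg]
    exact sub_right_comm xk _ xs
  have hgreedy : ∀ i, |M.mulVec e i| / √(sqNorm (M i)) ≤ |M.mulVec e ik| / √(sqNorm (M ik)) := by
    simpa only [hres, abs_neg] using hik
  rw [hstep, sqNorm_sub_orthogonalProjection]
  exact sub_le_sub_left (sqNorm_mulVec_div_frobSq_le M e hgreedy) _

/-- one-step contraction bound for the count-sketch Kaczmarz
(maximal weighted residual) step: the squared error decreases by at least
`‖SA(x_k - x⋆)‖² / ‖SA‖_F²`. -/
theorem csk_one_step_bound {m n d : ℕ}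
    (A : Matrix (Fin m) (Fin n) ℝ) (b : Fin m → ℝ) (xs : Fin n → ℝ)
    (hxs : A.mulVec xs = b) (hxs_row : ∃ z : Fin m → ℝ, A.transpose.mulVec z = xs)
    (S : Matrix (Fin d) (Fin m) ℝ) (hrows : ∀ i : Fin d, (S * A) i ≠ 0)
    (xk : Fin n → ℝ) (hk : ∃ z : Fin m → ℝ, A.transpose.mulVec z = xk - xs)
    (ik : Fin d)
    (hik : ∀ i : Fin d,
      |S.mulVec b i - (S * A).mulVec xk i| / Real.sqrt (sqNorm ((S * A) i)) ≤
      |S.mulVec b ik - (S * A).mulVec xk ik| / Real.sqrt (sqNorm ((S * A) ik)))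
    (xk1 : Fin n → ℝ)
    (hupd : xk1 = xk + ((S.mulVec b ik - ∑ j, (S * A) ik j * xk j) / sqNorm ((S * A) ik))
        • (S * A) ik) :
    sqNorm (xk1 - xs) ≤ sqNorm (xk - xs)
      - sqNorm ((S * A).mulVec (xk - xs)) / frobSq (S * A) :=
  csk_one_step_bound_general A b xs hxs S xk ik hik xk1 hupd
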